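/- arXiv:2407.10764 — 3 statements merged into one kernel-verified Lean document; each statement's English description precedes it below -/
import Mathlib

section
/- For n ∈ ℕ, p ∈ [0,1], and ε ∈ [0,1]: 2·(1 - p + p·exp(-2ε²))^n - 2·(1-p)^n ≤ 2·exp(-n·p·ε²/2). -/
theorem stmt_3 (n : ℕ) (p ε : ℝ) (hp0 : 0 ≤ p) (hp1 : p ≤ 1)
    (hε0 : 0 ≤ ε) (hε1 : ε ≤ 1) :
    2 * (1 - p + p * Real.exp (-2 * ε ^ 2)) ^ n - 2 * (1 - p) ^ n
      ≤ 2 * Real.exp (-(n : ℝ) * p * ε ^ 2 / 2) := by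
  have hε2 : 0 ≤ ε ^ 2 := sq_nonneg ε
  have hε2' : ε ^ 2 ≤ 1 := by nlinarith
  -- exp(-2ε²) ≤ 1 - ε²/2
  have hexp : Real.exp (-2 * ε ^ 2) ≤ 1 - ε ^ 2 / 2 := by
    have h1 : 1 + 2 * ε ^ 2 ≤ Real.exp (2 * ε ^ 2) := by
      have := Real.add_one_le_exp (2 * ε ^ 2); linarith
    have hpos : (0 : ℝ) < 1 + 2 * ε ^ 2 := by nlinarith
    have h2 : Real.exp (-2 * ε ^ 2) = (Real.exp (2 * ε ^ 2))⁻¹ := by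
      rw [← Real.exp_neg]; ring_nf
    rw [h2]
    have h3 : (Real.exp (2 * ε ^ 2))⁻¹ ≤ (1 + 2 * ε ^ 2)⁻¹ :=
      inv_anti₀ hpos h1
    have h4 : (1 + 2 * ε ^ 2)⁻¹ ≤ 1 - ε ^ 2 / 2 := by
      rw [inv_le_iff_one_le_mul₀ hpos] <;> nlinarith
    linarith
  have hbase : 1 - p + p * Real.exp (-2 * ε ^ 2) ≤ 1 - p * ε ^ 2 / 2 := by
    nlinarith [mul_le_mul_of_nonneg_left hexp hp0]
  have hmid : 0 ≤ 1 - p * ε ^ 2 / 2 := by nlinarith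
  have hbase0 : 0 ≤ 1 - p + p * Real.exp (-2 * ε ^ 2) := by
    have := Real.exp_pos (-2 * ε ^ 2); nlinarith
  have hpow : (1 - p + p * Real.exp (-2 * ε ^ 2)) ^ n
      ≤ Real.exp (-(n : ℝ) * p * ε ^ 2 / 2) := by
    calc (1 - p + p * Real.exp (-2 * ε ^ 2)) ^ n
        ≤ (1 - p * ε ^ 2 / 2) ^ n := pow_le_pow_left₀ hbase0 hbase n
      _ ≤ Real.exp (-(p * ε ^ 2 / 2)) ^ n := by
          apply pow_le_pow_left₀ hmid
          have := Real.add_one_le_exp (-(p * ε ^ 2 / 2)); linarith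
      _ = Real.exp (-(n : ℝ) * p * ε ^ 2 / 2) := by
          rw [← Real.exp_nat_mul]; ring_nf
  have hnn : 0 ≤ (1 - p) ^ n := pow_nonneg (by linarith) n
  linarith
end

section
/- Let Z ~ Bin(n, p) and ε ∈ [0,1]. Then E[exp(-2ε²·Z)·1{Z > 0}] ≤ exp(-n·p·ε²/2). -/
/-! Bounding the indicator by `1`, the sum is at most the binomial generating function
`(p t + 1 - p)^n` at `t = exp (-2ε²)`. Since `exp (-y) ≤ 1 / (1 + y) ≤ 1 - y / 4` for `y ∈ [0, 3]`,
we get `t ≤ 1 - ε² / 2`, so `p t + 1 - p ≤ 1 - p ε² / 2 ≤ exp (-p ε² / 2)`. -/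

open Real Finset

lemma Real.exp_neg_le_one_sub_div_four {y : ℝ} (hy0 : 0 ≤ y) (hy3 : y ≤ 3) :
    exp (-y) ≤ 1 - y / 4 := by
  have hexp : y + 1 ≤ exp y := add_one_le_exp y
  have hmul : exp (-y) * exp y = 1 := by rw [← exp_add, neg_add_cancel, exp_zero]
  nlinarith [exp_pos (-y)]

lemma pow_le_exp_mul_of_le_one_add {a x : ℝ} (ha : 0 ≤ a) (h : a ≤ 1 + x) (n : ℕ) :
    a ^ n ≤ exp (n * x) := by
  rw [exp_nat_mul]
  exact pow_le_pow_left₀ ha (h.trans (by linarith [add_one_le_exp x])) n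

lemma mul_add_pow_eq_sum (n : ℕ) (p q t : ℝ) :
    (p * t + q) ^ n = ∑ k ∈ range (n + 1), (n.choose k : ℝ) * p ^ k * q ^ (n - k) * t ^ k := by
  rw [add_pow]
  refine sum_congr rfl fun k _ => ?_
  ring

theorem stmt_4 (n : ℕ) (p ε : ℝ) (hp0 : 0 ≤ p) (hp1 : p ≤ 1)
    (hε0 : 0 ≤ ε) (hε1 : ε ≤ 1) :
    ∑ k ∈ Finset.range (n + 1),
        (n.choose k : ℝ) * p ^ k * (1 - p) ^ (n - k) *
          (Real.exp (-2 * ε ^ 2 * k) * (if 0 < k then 1 else 0))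
      ≤ Real.exp (-(n : ℝ) * p * ε ^ 2 / 2) := by
  have hq : 0 ≤ 1 - p := by linarith
  set t := exp (-2 * ε ^ 2)
  have hterm (k : ℕ) : exp (-2 * ε ^ 2 * k) * (if 0 < k then 1 else 0) ≤ t ^ k := by
    rw [← exp_nat_mul, mul_comm (k : ℝ)]
    split_ifs <;> simp [exp_nonneg]
  have ht : t ≤ 1 - ε ^ 2 / 2 := by
    have h := exp_neg_le_one_sub_div_four (y := 2 * ε ^ 2) (by positivity) (by nlinarith)
    rw [neg_mul_eq_neg_mul] at h
    linarith
  calc _ ≤ ∑ k ∈ range (n + 1), (n.choose k : ℝ) * p ^ k * (1 - p) ^ (n - k) * t ^ k :=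
        sum_le_sum fun k _ => mul_le_mul_of_nonneg_left (hterm k) (by positivity)
    _ = (p * t + (1 - p)) ^ n := (mul_add_pow_eq_sum n p (1 - p) t).symm
    _ ≤ exp (n * -(p * ε ^ 2 / 2)) :=
        pow_le_exp_mul_of_le_one_add (by positivity)
          (by nlinarith [mul_le_mul_of_nonneg_left ht hp0]) n
    _ = exp (-(n : ℝ) * p * ε ^ 2 / 2) := by ring_nf
end

section
/- Let (γ̃ⁱ, ξ̃ⁱ), i = 1,...,n, be i.i.d. copies of (γ̃, ξ̃) ∈ ℝ^p × ℝ^q, fix γ ∈ ℝ^p and x, and assume: (i) ℓ(x,·) takes values in [0,1]; (ii) the map y ↦ E[ℓ(x,ξ̃)|γ̃=y] is L_γ-Lipschitz; (iii) γ̃ has density bounded below by f̲ > 0 on its support, which contains B(γ,h). Define the spherical-kernel Nadaraya-Watson estimator Ê(γ) = ∑ᵢ ℓ(x,ξ̃ⁱ)·1{‖γ-γ̃ⁱ‖≤h}/∑ⱼ 1{‖γ-γ̃ʲ‖≤h} (and Ê(γ)=0 when the denominator is 0). Then for any ε ∈ [0,1], P(|E[ℓ(x,ξ̃)|γ̃=γ]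 - Ê(γ)| > L_γ·h + ε) ≤ 2·exp(-n·c·f̲·h^p·ε²/2), where c = π^{p/2}/Γ(p/2+1). -/
/-!
Let `B = B(γ, h)`. If the estimate misses `m γ` by more than `Lγ h + ε`, then, since the
Lipschitz bound controls the bias of every sample falling in `B`, one of the two localized
residual sums `∑ᵢ 1{γ̃ⁱ ∈ B} (±(m γ̃ⁱ - ℓ ξ̃ⁱ) - ε)` is nonnegative. Each is a sum of i.i.d.
terms, so Chernoff's bound at `t = 4ε` reduces it to the moment generating function of one
term. Conditionally on `γ̃` the residual `m γ̃ - ℓ ξ̃` is centred and lies in an interval of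
length one, so by Hoeffding's lemma, applied conditionally, that mgf is at most
`1 - P (1 - e^{-2ε²}) ≤ exp (-P ε² / 2)` with `P = P(γ̃ ∈ B) ≥ f̲ · vol B = f̲ c hᵖ`.
-/

open MeasureTheory ProbabilityTheory Real
open scoped ENNReal

lemma exp_mul_le_of_mem_Icc {c x : ℝ} (t : ℝ) (hx : x ∈ Set.Icc (c - 1) c) :
    exp (t * x) ≤ (c - x) * exp (t * (c - 1)) + (x - c + 1) * exp (t * c) := by
  have key := convexOn_exp.2 (Set.mem_univ (t * (c - 1))) (Set.mem_univ (t * c))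
    (show 0 ≤ c - x by linarith [hx.2]) (show 0 ≤ x - c + 1 by linarith [hx.1]) (by ring)
  rw [smul_eq_mul, smul_eq_mul, smul_eq_mul, smul_eq_mul] at key
  calc exp (t * x) = exp ((c - x) * (t * (c - 1)) + (x - c + 1) * (t * c)) := by ring_nf
    _ ≤ _ := key

lemma two_point_hoeffding {c : ℝ} (hc0 : 0 ≤ c) (hc1 : c ≤ 1) (t : ℝ) :
    c * exp (t * (c - 1)) + (1 - c) * exp (t * c) ≤ exp (t ^ 2 / 8) := by
  -- the left side is the mgf at `t` of the centred law `c δ_{c-1} + (1 - c) δ_c`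
  set ν : Measure ℝ := ENNReal.ofReal c • Measure.dirac (c - 1) +
    ENNReal.ofReal (1 - c) • Measure.dirac c
  have : IsProbabilityMeasure ν := ⟨by
    simp [ν, ← ENNReal.ofReal_add hc0 (sub_nonneg.2 hc1)]⟩
  have integral_ν (g : ℝ → ℝ) : ∫ x, g x ∂ν = c * g (c - 1) + (1 - c) * g c := by
    rw [integral_add_measure, integral_smul_measure, integral_smul_measure, integral_dirac,
      integral_dirac, ENNReal.toReal_ofReal hc0, ENNReal.toReal_ofReal (sub_nonneg.2 hc1)]
    · rfl
    all_goals exact (integrable_dirac enorm_lt_top).smul_measure ENNReal.ofReal_ne_top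
  have hsupp : ∀ᵐ x ∂ν, id x ∈ Set.Icc (c - 1) c := by
    rw [ae_add_measure_iff]
    constructor <;>
      refine Measure.ae_smul_measure ((ae_dirac_iff measurableSet_Icc).2 ?_) _ <;> simp
  have hmgf := (hasSubgaussianMGF_of_mem_Icc_of_integral_eq_zero aemeasurable_id hsupp
    (by rw [integral_ν]; simp only [id]; ring)).mgf_le t
  rw [mgf, integral_ν, sub_sub_cancel, nnnorm_one] at hmgf
  refine hmgf.trans_eq (congrArg exp ?_)
  push_cast
  ring

lemma exp_mul_le_exp_abs {x : ℝ} (t : ℝ) (hx : |x| ≤ 1) : exp (t * x) ≤ exp |t| := by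
  refine exp_le_exp.2 ((le_abs_self _).trans ?_)
  rw [abs_mul]
  exact mul_le_of_le_one_right (abs_nonneg t) hx

lemma one_sub_mul_one_sub_exp_le {P ε : ℝ} (hP : 0 ≤ P) (hε0 : 0 ≤ ε) (hε1 : ε ≤ 1) :
    1 - P * (1 - exp (-(2 * ε ^ 2))) ≤ exp (-(P * ε ^ 2 / 2)) := by
  have hε : ε ^ 2 / 2 ≤ 1 - exp (-(2 * ε ^ 2)) := by
    have hx : exp (-(2 * ε ^ 2)) * (2 * ε ^ 2 + 1) ≤ 1 := by
      calc exp (-(2 * ε ^ 2)) * (2 * ε ^ 2 + 1) ≤ exp (-(2 * ε ^ 2)) * exp (2 * ε ^ 2) :=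
            mul_le_mul_of_nonneg_left (add_one_le_exp _) (exp_pos _).le
        _ = 1 := by rw [← exp_add, neg_add_cancel, exp_zero]
    have hε2 : ε ^ 2 ≤ 1 := pow_le_one₀ hε0 hε1
    nlinarith [sq_nonneg ε]
  calc 1 - P * (1 - exp (-(2 * ε ^ 2))) ≤ exp (-(P * (1 - exp (-(2 * ε ^ 2))))) := by
        linarith [add_one_le_exp (-(P * (1 - exp (-(2 * ε ^ 2)))))]
    _ ≤ exp (-(P * ε ^ 2 / 2)) := by
        gcongr
        rw [mul_div_assoc]
        exact mul_le_mul_of_nonneg_left hε hP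

section Conditional

variable {Ω : Type*} {𝓖 mΩ : MeasurableSpace Ω} {μ : Measure Ω}

lemma integral_mul_eq_zero_of_condExp_eq_zero [IsFiniteMeasure μ] (h𝓖 : 𝓖 ≤ mΩ)
    {Z Y : Ω → ℝ} (hZ : StronglyMeasurable[𝓖] Z) (hZY : Integrable (Z * Y) μ)
    (hY : Integrable Y μ) (hY0 : μ[Y | 𝓖] =ᵐ[μ] 0) :
    ∫ ω, Z ω * Y ω ∂μ = 0 := calc
  ∫ ω, Z ω * Y ω ∂μ = ∫ ω, μ[Z * Y | 𝓖] ω ∂μ := (integral_condExp h𝓖).symm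
  _ = ∫ ω, Z ω * μ[Y | 𝓖] ω ∂μ :=
    integral_congr_ae (condExp_mul_of_stronglyMeasurable_left hZ hZY hY)
  _ = 0 := by
    rw [integral_congr_ae (hY0.mono fun ω hω => by rw [hω, Pi.zero_apply, mul_zero])]
    exact integral_zero _ _

lemma ae_mem_Icc_condExp [IsFiniteMeasure μ] (h𝓖 : 𝓖 ≤ mΩ) {f : Ω → ℝ} {a b : ℝ}
    (hf : Integrable f μ) (hab : ∀ᵐ ω ∂μ, f ω ∈ Set.Icc a b) :
    ∀ᵐ ω ∂μ, μ[f | 𝓖] ω ∈ Set.Icc a b := by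
  have ha := condExp_mono (m := 𝓖) (integrable_const a) hf (hab.mono fun _ h => h.1)
  have hb := condExp_mono (m := 𝓖) hf (integrable_const b) (hab.mono fun _ h => h.2)
  rw [condExp_const h𝓖] at ha hb
  filter_upwards [ha, hb] with ω ha hb using ⟨ha, hb⟩

/- The chord of `exp` over `[C - 1, C]` bounds `exp (t * Y)` by an affine function of `Y` with
`𝓖`-measurable coefficients; the linear term integrates to zero against `W` since
`μ[Y | 𝓖] = 0`, and `two_point_hoeffding` bounds the constant term. -/
lemma integral_mul_exp_le_of_condExp_eq_zero [IsProbabilityMeasure μ] (h𝓖 : 𝓖 ≤ mΩ)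
    {W C Y : Ω → ℝ} (hW : Measurable[𝓖] W) (hW0 : ∀ ω, 0 ≤ W ω) (hWint : Integrable W μ)
    (hC : Measurable[𝓖] C) (hC01 : ∀ᵐ ω ∂μ, C ω ∈ Set.Icc 0 1)
    (hYm : Measurable Y) (hY : ∀ᵐ ω ∂μ, Y ω ∈ Set.Icc (C ω - 1) (C ω))
    (hY0 : μ[Y | 𝓖] =ᵐ[μ] 0) (t : ℝ) :
    ∫ ω, W ω * exp (t * Y ω) ∂μ ≤ (∫ ω, W ω ∂μ) * exp (t ^ 2 / 8) := by
  set K : Ω → ℝ := fun ω => exp (t * C ω) - exp (t * (C ω - 1))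
  have hK : Measurable[𝓖] K := by fun_prop
  have hbound : ∀ᵐ ω ∂μ, |C ω| ≤ 1 ∧ |C ω - 1| ≤ 1 ∧ |Y ω| ≤ 1 := by
    filter_upwards [hC01, hY] with ω hCω hYω
    refine ⟨abs_le.2 ⟨?_, ?_⟩, abs_le.2 ⟨?_, ?_⟩, abs_le.2 ⟨?_, ?_⟩⟩ <;>
      linarith [hCω.1, hCω.2, hYω.1, hYω.2]
  have hWexp : Integrable (fun ω => W ω * exp (t * Y ω)) μ := by
    refine hWint.mul_bdd (c := exp |t|) (by fun_prop) (hbound.mono fun ω hω => ?_)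
    rw [Real.norm_of_nonneg (exp_pos _).le]
    exact exp_mul_le_exp_abs t hω.2.2
  have hWKY : Integrable (fun ω => W ω * (K ω * Y ω)) μ := by
    refine hWint.mul_bdd (((hK.mono h𝓖 le_rfl).mul hYm).aestronglyMeasurable)
      (c := 2 * exp |t|) (hbound.mono fun ω hω => ?_)
    have h1 := exp_mul_le_exp_abs t hω.1
    have h2 := exp_mul_le_exp_abs t hω.2.1
    have hK2 : |K ω| ≤ 2 * exp |t| :=
      abs_le.2 ⟨by linarith [exp_pos (t * C ω)], by linarith [exp_pos (t * (C ω - 1))]⟩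
    rw [norm_mul, Real.norm_eq_abs, Real.norm_eq_abs, ← mul_one (2 * exp |t|)]
    exact mul_le_mul hK2 hω.2.2 (abs_nonneg _) (by positivity)
  have hYint : Integrable Y μ :=
    .of_mem_Icc (-1) 1 hYm.aemeasurable (hbound.mono fun ω hω => abs_le.1 hω.2.2)
  have hcentered : ∫ ω, W ω * (K ω * Y ω) ∂μ = 0 := by
    have hWKY' : Integrable (W * K * Y) μ :=
      hWKY.congr (ae_of_all _ fun ω => (mul_assoc _ _ _).symm)
    simpa only [Pi.mul_apply, mul_assoc] using
      integral_mul_eq_zero_of_condExp_eq_zero h𝓖 (hW.mul hK).stronglyMeasurable hWKY' hYint hY0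
  have hpointwise : ∀ᵐ ω ∂μ,
      W ω * exp (t * Y ω) ≤ W ω * exp (t ^ 2 / 8) + W ω * (K ω * Y ω) := by
    filter_upwards [hC01, hY] with ω hCω hYω
    calc W ω * exp (t * Y ω)
        ≤ W ω * ((C ω - Y ω) * exp (t * (C ω - 1)) + (Y ω - C ω + 1) * exp (t * C ω)) :=
          mul_le_mul_of_nonneg_left (exp_mul_le_of_mem_Icc t hYω) (hW0 ω)
      _ = W ω * (C ω * exp (t * (C ω - 1)) + (1 - C ω) * exp (t * C ω)) +
          W ω * (K ω * Y ω) := by ring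
      _ ≤ W ω * exp (t ^ 2 / 8) + W ω * (K ω * Y ω) := by
          gcongr
          · exact hW0 ω
          · exact two_point_hoeffding hCω.1 hCω.2 t
  calc ∫ ω, W ω * exp (t * Y ω) ∂μ
      ≤ ∫ ω, (W ω * exp (t ^ 2 / 8) + W ω * (K ω * Y ω)) ∂μ :=
        integral_mono_ae hWexp ((hWint.mul_const _).add hWKY) hpointwise
    _ = (∫ ω, W ω ∂μ) * exp (t ^ 2 / 8) := by
        rw [integral_add (hWint.mul_const _) hWKY, integral_mul_const, hcentered, add_zero]

lemma exp_indicator_mul_sub (S : Set Ω) (t ε y : ℝ) (ω : Ω) :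
    exp (t * (S.indicator 1 ω * (y - ε))) =
      1 - S.indicator 1 ω + exp (-(t * ε)) * (S.indicator 1 ω * exp (t * y)) := by
  by_cases hω : ω ∈ S
  · simp only [Set.indicator_of_mem hω, Pi.one_apply, one_mul, sub_self, zero_add, ← exp_add]
    ring_nf
  · simp [Set.indicator_of_notMem hω]

lemma mgf_indicator_mul_sub_le [IsProbabilityMeasure μ] (h𝓖 : 𝓖 ≤ mΩ) {S : Set Ω}
    (hS : MeasurableSet[𝓖] S) {C Y : Ω → ℝ} (hC : Measurable[𝓖] C)
    (hC01 : ∀ᵐ ω ∂μ, C ω ∈ Set.Icc 0 1) (hYm : Measurable Y)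
    (hY : ∀ᵐ ω ∂μ, Y ω ∈ Set.Icc (C ω - 1) (C ω)) (hY0 : μ[Y | 𝓖] =ᵐ[μ] 0) (t ε : ℝ) :
    mgf (fun ω => S.indicator 1 ω * (Y ω - ε)) μ t ≤
      1 - μ.real S * (1 - exp (t ^ 2 / 8 - t * ε)) := by
  have hSm : MeasurableSet S := h𝓖 _ hS
  have hind : Integrable (S.indicator (1 : Ω → ℝ)) μ := (integrable_const 1).indicator hSm
  have hY1 : ∀ᵐ ω ∂μ, Y ω ∈ Set.Icc (-1) 1 := by
    filter_upwards [hC01, hY] with ω hCω hYω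
    constructor <;> linarith [hCω.1, hCω.2, hYω.1, hYω.2]
  have hexp : Integrable (fun ω => S.indicator 1 ω * exp (t * Y ω)) μ :=
    (integrable_exp_mul_of_mem_Icc hYm.aemeasurable hY1).bdd_mul (c := 1)
      (measurable_const.indicator hSm).aestronglyMeasurable
      (ae_of_all _ fun ω => (norm_indicator_le_norm_self 1 ω).trans_eq norm_one)
  have hle := integral_mul_exp_le_of_condExp_eq_zero h𝓖 (W := S.indicator 1)
    (measurable_const.indicator hS) (Set.indicator_nonneg fun _ _ => zero_le_one) hind
    hC hC01 hYm hY hY0 t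
  rw [integral_indicator_one hSm] at hle
  calc mgf (fun ω => S.indicator 1 ω * (Y ω - ε)) μ t
      = 1 - μ.real S + exp (-(t * ε)) * ∫ ω, S.indicator 1 ω * exp (t * Y ω) ∂μ := by
        simp_rw [mgf, exp_indicator_mul_sub]
        rw [integral_add (f := fun ω => 1 - S.indicator 1 ω) ((integrable_const 1).sub hind)
          (hexp.const_mul _), integral_sub (integrable_const 1) hind, integral_const_mul,
          integral_indicator_one hSm, integral_const, probReal_univ, one_smul]
    _ ≤ 1 - μ.real S + exp (-(t * ε)) * (μ.real S * exp (t ^ 2 / 8)) := by gcongr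
    _ = 1 - μ.real S * (1 - exp (t ^ 2 / 8 - t * ε)) := by
        rw [sub_eq_neg_add (t ^ 2 / 8), exp_add]
        ring

end Conditional

lemma measureReal_sum_nonneg_le_mgf_pow {Ω α ι : Type*} [MeasurableSpace Ω]
    [MeasurableSpace α] [Fintype ι] {μ : Measure Ω} [IsProbabilityMeasure μ]
    {Z : ι → Ω → α} {Z₀ : Ω → α} (hZ : ∀ i, Measurable (Z i)) (hZ₀ : Measurable Z₀)
    (hindep : iIndepFun Z μ) (hident : ∀ i, μ.map (Z i) = μ.map Z₀) {F : α → ℝ}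
    (hF : Measurable F) {t : ℝ} (ht : 0 ≤ t)
    (hint : Integrable (fun ω => exp (t * F (Z₀ ω))) μ) :
    μ.real {ω | 0 ≤ ∑ i, F (Z i ω)} ≤ mgf (fun ω => F (Z₀ ω)) μ t ^ Fintype.card ι := by
  have hFZ : ∀ i, IdentDistrib (fun ω => F (Z i ω)) (fun ω => F (Z₀ ω)) μ μ := fun i =>
    (IdentDistrib.mk (hZ i).aemeasurable hZ₀.aemeasurable (hident i)).comp hF
  have hindepF : iIndepFun (fun i ω => F (Z i ω)) μ := hindep.comp (fun _ => F) fun _ => hF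
  have hmeasF : ∀ i, Measurable fun ω => F (Z i ω) := fun i => hF.comp (hZ i)
  have hintF : ∀ i ∈ Finset.univ, Integrable (fun ω => exp (t * F (Z i ω))) μ := fun i _ =>
    ((hFZ i).comp (measurable_const_mul t).exp).integrable_iff.2 hint
  calc μ.real {ω | 0 ≤ ∑ i, F (Z i ω)}
      ≤ exp (-t * 0) * mgf (∑ i, fun ω => F (Z i ω)) μ t := by
        simpa only [Finset.sum_apply] using
          measure_ge_le_exp_mul_mgf 0 ht (hindepF.integrable_exp_mul_sum hmeasF hintF)
    _ = ∏ i : ι, mgf (fun ω => F (Z i ω)) μ t := by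
        rw [mul_zero, exp_zero, one_mul, hindepF.mgf_sum hmeasF]
    _ = mgf (fun ω => F (Z₀ ω)) μ t ^ Fintype.card ι :=
        Finset.prod_eq_pow_card fun i _ => mgf_congr_of_identDistrib _ _ (hFZ i) t

lemma measureReal_sum_indicator_mul_sub_nonneg_le {Ω α ι : Type*} {𝓖 mΩ : MeasurableSpace Ω}
    [MeasurableSpace α] [Fintype ι] {μ : Measure Ω} [IsProbabilityMeasure μ]
    {Z : ι → Ω → α} {Z₀ : Ω → α} (hZ : ∀ i, Measurable (Z i)) (hZ₀ : Measurable Z₀)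
    (hindep : iIndepFun Z μ) (hident : ∀ i, μ.map (Z i) = μ.map Z₀)
    {S : Set α} (hS : MeasurableSet S) {R : α → ℝ} (hR : Measurable R) (h𝓖 : 𝓖 ≤ mΩ)
    (hS𝓖 : MeasurableSet[𝓖] (Z₀ ⁻¹' S)) {C : Ω → ℝ} (hC : Measurable[𝓖] C)
    (hC01 : ∀ᵐ ω ∂μ, C ω ∈ Set.Icc 0 1)
    (hRC : ∀ᵐ ω ∂μ, R (Z₀ ω) ∈ Set.Icc (C ω - 1) (C ω))
    (hR0 : μ[fun ω => R (Z₀ ω) | 𝓖] =ᵐ[μ] 0) {ε : ℝ} (hε0 : 0 ≤ ε) (hε1 : ε ≤ 1) :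
    μ.real {ω | 0 ≤ ∑ i, S.indicator 1 (Z i ω) * (R (Z i ω) - ε)} ≤
      exp (-(μ.real (Z₀ ⁻¹' S) * ε ^ 2 / 2)) ^ Fintype.card ι := by
  have hF : Measurable fun z => S.indicator 1 z * (R z - ε) :=
    (measurable_const.indicator hS).mul (hR.sub_const ε)
  have hF₀ : ∀ᵐ ω ∂μ, S.indicator 1 (Z₀ ω) * (R (Z₀ ω) - ε) ∈ Set.Icc (-2) 1 := by
    filter_upwards [hC01, hRC] with ω hCω hRω
    by_cases hω : Z₀ ω ∈ S
    · rw [Set.indicator_of_mem hω, Pi.one_apply, one_mul]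
      constructor <;> linarith [hCω.1, hCω.2, hRω.1, hRω.2]
    · rw [Set.indicator_of_notMem hω, zero_mul]
      norm_num
  have hmgf : mgf (fun ω => S.indicator 1 (Z₀ ω) * (R (Z₀ ω) - ε)) μ (4 * ε) ≤
      exp (-(μ.real (Z₀ ⁻¹' S) * ε ^ 2 / 2)) := by
    -- `t = 4ε` minimises `t ^ 2 / 8 - t * ε`
    have hexponent : (4 * ε) ^ 2 / 8 - 4 * ε * ε = -(2 * ε ^ 2) := by ring
    refine (mgf_indicator_mul_sub_le h𝓖 hS𝓖 hC hC01 (hR.comp hZ₀) hRC hR0 _ ε).trans ?_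
    rw [hexponent]
    exact one_sub_mul_one_sub_exp_le measureReal_nonneg hε0 hε1
  exact (measureReal_sum_nonneg_le_mgf_pow hZ hZ₀ hindep hident hF (by positivity)
    (integrable_exp_mul_of_mem_Icc (hF.comp hZ₀).aemeasurable hF₀)).trans
    (pow_le_pow_left₀ mgf_nonneg hmgf _)

lemma measureReal_residual_sum_nonneg_le {Ω α β ι : Type*} {𝓖 mΩ : MeasurableSpace Ω}
    [MeasurableSpace α] [MeasurableSpace β] [Fintype ι] {μ : Measure Ω}
    [IsProbabilityMeasure μ] {X : ι → Ω → α} {Y : ι → Ω → β} {X₀ : Ω → α} {Y₀ : Ω → β}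
    (hX : ∀ i, Measurable (X i)) (hY : ∀ i, Measurable (Y i)) (h𝓖 : 𝓖 ≤ mΩ)
    (hX₀ : Measurable[𝓖] X₀) (hY₀ : Measurable Y₀)
    (hindep : iIndepFun (fun i ω => (X i ω, Y i ω)) μ)
    (hident : ∀ i, μ.map (fun ω => (X i ω, Y i ω)) = μ.map (fun ω => (X₀ ω, Y₀ ω)))
    {ℓ : β → ℝ} (hℓ : Measurable ℓ) (hℓ01 : ∀ y, ℓ y ∈ Set.Icc (0 : ℝ) 1)
    {m : α → ℝ} (hm : Measurable m) (hmℓ : (fun ω => m (X₀ ω)) =ᵐ[μ] μ[fun ω => ℓ (Y₀ ω) | 𝓖])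
    {B : Set α} (hB : MeasurableSet B) {ε : ℝ} (hε0 : 0 ≤ ε) (hε1 : ε ≤ 1) :
    μ.real {ω | 0 ≤ ∑ i, B.indicator 1 (X i ω) * (m (X i ω) - ℓ (Y i ω) - ε)} ≤
        exp (-(μ.real (X₀ ⁻¹' B) * ε ^ 2 / 2)) ^ Fintype.card ι ∧
      μ.real {ω | 0 ≤ ∑ i, B.indicator 1 (X i ω) * (ℓ (Y i ω) - m (X i ω) - ε)} ≤
        exp (-(μ.real (X₀ ⁻¹' B) * ε ^ 2 / 2)) ^ Fintype.card ι := by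
  have hmX : Measurable[𝓖] fun ω => m (X₀ ω) := hm.comp hX₀
  have hℓint : Integrable (fun ω => ℓ (Y₀ ω)) μ :=
    .of_mem_Icc 0 1 (hℓ.comp hY₀).aemeasurable (ae_of_all _ fun ω => hℓ01 _)
  have hm01 : ∀ᵐ ω ∂μ, m (X₀ ω) ∈ Set.Icc (0 : ℝ) 1 := by
    filter_upwards [hmℓ, ae_mem_Icc_condExp h𝓖 hℓint (ae_of_all _ fun ω => hℓ01 _)]
      with ω h1 h2
    rwa [h1]
  have hmint : Integrable (fun ω => m (X₀ ω)) μ :=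
    .of_mem_Icc 0 1 (hmX.mono h𝓖 le_rfl).aemeasurable hm01
  have hres : μ[(fun ω => m (X₀ ω)) - fun ω => ℓ (Y₀ ω) | 𝓖] =ᵐ[μ] 0 := by
    filter_upwards [condExp_sub hmint hℓint 𝓖, hmℓ] with ω h1 h2
    rw [h1, Pi.sub_apply, condExp_of_stronglyMeasurable h𝓖 hmX.stronglyMeasurable hmint, ← h2,
      sub_self, Pi.zero_apply]
  have hres' : μ[fun ω => ℓ (Y₀ ω) - m (X₀ ω) | 𝓖] =ᵐ[μ] 0 := by
    have hneg : (fun ω => ℓ (Y₀ ω) - m (X₀ ω)) =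
        -((fun ω => m (X₀ ω)) - fun ω => ℓ (Y₀ ω)) := by
      ext ω; simp
    rw [hneg]
    filter_upwards [condExp_neg ((fun ω => m (X₀ ω)) - fun ω => ℓ (Y₀ ω)) 𝓖, hres]
      with ω h1 h2
    rw [h1, Pi.neg_apply, h2, Pi.zero_apply, neg_zero]
  have hpre : (fun ω => (X₀ ω, Y₀ ω)) ⁻¹' (B ×ˢ Set.univ) = X₀ ⁻¹' B := by
    rw [Set.mk_preimage_prod, Set.preimage_univ, Set.inter_univ]
  have hind (x : α) (y : β) :
      (B ×ˢ Set.univ).indicator (1 : α × β → ℝ) (x, y) = B.indicator 1 x := by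
    simp [Set.indicator_prod_one]
  have tail := fun (R : α × β → ℝ) (hR : Measurable R) (C : Ω → ℝ) =>
    measureReal_sum_indicator_mul_sub_nonneg_le (fun i => (hX i).prodMk (hY i))
      ((hX₀.mono h𝓖 le_rfl).prodMk hY₀) hindep hident (hB.prod MeasurableSet.univ) hR h𝓖
      (hpre ▸ hX₀ hB) (C := C) (ε := ε)
  constructor
  · have h := tail (fun z => m z.1 - ℓ z.2)
      ((hm.comp measurable_fst).sub (hℓ.comp measurable_snd)) _ hmX hm01
      (ae_of_all _ fun ω => ⟨by linarith [(hℓ01 (Y₀ ω)).2], by linarith [(hℓ01 (Y₀ ω)).1]⟩)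
      hres hε0 hε1
    simpa only [hind, hpre] using h
  · have h := tail (fun z => ℓ z.2 - m z.1)
      ((hℓ.comp measurable_snd).sub (hm.comp measurable_fst)) (fun ω => 1 - m (X₀ ω))
      (measurable_const.sub hmX) (hm01.mono fun ω h => ⟨by linarith [h.2], by linarith [h.1]⟩)
      (ae_of_all _ fun ω => ⟨by linarith [(hℓ01 (Y₀ ω)).1], by linarith [(hℓ01 (Y₀ ω)).2]⟩)
      hres' hε0 hε1
    simpa only [hind, hpre] using h

lemma EuclideanSpace.volume_closedBall_fin (p : ℕ) (x : EuclideanSpace ℝ (Fin p)) {r : ℝ}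
    (hr : 0 ≤ r) :
    volume (Metric.closedBall x r) =
      ENNReal.ofReal (π ^ ((p : ℝ) / 2) / Gamma ((p : ℝ) / 2 + 1) * r ^ p) := by
  rcases Nat.eq_zero_or_pos p with rfl | hp
  · have hball : Metric.closedBall x r = Set.univ :=
      Set.eq_univ_of_forall fun y => by simpa [Subsingleton.elim y x] using hr
    rw [hball, ← (PiLp.volume_preserving_toLp (Fin 0)).measure_preimage
      MeasurableSet.univ.nullMeasurableSet]
    simp [volume_pi]
  · have : Nonempty (Fin p) := ⟨⟨0, hp⟩⟩
    rw [EuclideanSpace.volume_closedBall, Fintype.card_fin, sqrt_eq_rpow, ← rpow_natCast,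
      ← rpow_mul pi_pos.le, ← ENNReal.ofReal_pow hr, ← ENNReal.ofReal_mul (by positivity),
      mul_comm]
    congr 4
    ring

lemma ofReal_mul_le_measure_preimage_of_le_density {Ω α : Type*} [MeasurableSpace Ω]
    [MeasurableSpace α] {μ : Measure Ω} {ν : Measure α} {X : Ω → α} (hX : Measurable X)
    {f : α → ℝ≥0∞} (hdens : μ.map X = ν.withDensity f) {A : Set α} (hA : MeasurableSet A)
    {c : ℝ≥0∞} (hc : ∀ y ∈ A, c ≤ f y) :
    c * ν A ≤ μ (X ⁻¹' A) := by
  rw [← Measure.map_apply hX hA, hdens, withDensity_apply _ hA, ← setLIntegral_const]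
  exact setLIntegral_mono' hA hc

lemma mul_le_measureReal_preimage_closedBall {Ω : Type*} [MeasurableSpace Ω] {μ : Measure Ω}
    [IsFiniteMeasure μ] {p : ℕ} {X : Ω → EuclideanSpace ℝ (Fin p)} (hX : Measurable X)
    {f : EuclideanSpace ℝ (Fin p) → ℝ≥0∞} (hdens : μ.map X = volume.withDensity f)
    {x : EuclideanSpace ℝ (Fin p)} {r c : ℝ} (hr : 0 ≤ r) (hc : 0 ≤ c)
    (hf : ∀ y ∈ Metric.closedBall x r, ENNReal.ofReal c ≤ f y) :
    c * (π ^ ((p : ℝ) / 2) / Gamma ((p : ℝ) / 2 + 1) * r ^ p) ≤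
      μ.real (X ⁻¹' Metric.closedBall x r) := by
  have h := ofReal_mul_le_measure_preimage_of_le_density hX hdens measurableSet_closedBall hf
  rwa [EuclideanSpace.volume_closedBall_fin p x hr, ← ENNReal.ofReal_mul hc,
    ENNReal.ofReal_le_iff_le_toReal (measure_ne_top _ _)] at h

noncomputable def nadarayaWatson {ι : Type*} [Fintype ι] (w ℓ : ι → ℝ) : ℝ :=
  if 0 < ∑ i, w i then (∑ i, w i * ℓ i) / ∑ i, w i else 0

lemma sum_nonneg_or_of_lt_abs_sub_nadarayaWatson {ι : Type*} [Fintype ι] {w ℓ r : ι → ℝ}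
    {y δ ε : ℝ} (hw : ∀ i, 0 ≤ w i) (hr : ∀ i, w i ≠ 0 → |y - r i| ≤ δ)
    (hdev : δ + ε < |y - nadarayaWatson w ℓ|) :
    0 ≤ ∑ i, w i * (r i - ℓ i - ε) ∨ 0 ≤ ∑ i, w i * (ℓ i - r i - ε) := by
  have hsum (g : ι → ℝ) : ∑ i, w i * (g i - ε) = ∑ i, w i * g i - ε * ∑ i, w i := by
    rw [Finset.mul_sum, ← Finset.sum_sub_distrib]
    exact Finset.sum_congr rfl fun i _ => by ring
  rw [hsum, hsum]
  rw [nadarayaWatson] at hdev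
  split_ifs at hdev with hW
  · have hbias : |∑ i, w i * (y - r i)| ≤ δ * ∑ i, w i := by
      rw [Finset.mul_sum]
      refine (Finset.abs_sum_le_sum_abs _ _).trans (Finset.sum_le_sum fun i _ => ?_)
      rw [abs_mul, abs_of_nonneg (hw i), mul_comm δ]
      rcases (hw i).eq_or_lt with h0 | hpos
      · rw [← h0, zero_mul, zero_mul]
      · exact mul_le_mul_of_nonneg_left (hr i hpos.ne') (hw i)
    have hsplit : y - (∑ i, w i * ℓ i) / ∑ i, w i =
        ((∑ i, w i * (y - r i)) + ∑ i, w i * (r i - ℓ i)) / ∑ i, w i := by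
      rw [eq_div_iff hW.ne', sub_mul, div_mul_cancel₀ _ hW.ne', Finset.mul_sum,
        ← Finset.sum_add_distrib, ← Finset.sum_sub_distrib]
      exact Finset.sum_congr rfl fun i _ => by ring
    rw [hsplit, abs_div, abs_of_pos hW, lt_div_iff₀ hW] at hdev
    have key : ε * ∑ i, w i < |∑ i, w i * (r i - ℓ i)| := by
      linarith [abs_add_le (∑ i, w i * (y - r i)) (∑ i, w i * (r i - ℓ i))]
    have hneg : ∑ i, w i * (ℓ i - r i) = -∑ i, w i * (r i - ℓ i) := by
      rw [← Finset.sum_neg_distrib]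
      exact Finset.sum_congr rfl fun i _ => by ring
    rcases lt_abs.1 key with h | h
    · left; linarith
    · right; linarith
  · have hW0 : ∀ i, w i = 0 := fun i =>
      (Finset.sum_eq_zero_iff_of_nonneg fun i _ => hw i).1
        (le_antisymm (not_lt.1 hW) (Finset.sum_nonneg fun i _ => hw i)) i (Finset.mem_univ i)
    left
    simp [hW0]

theorem stmt_10_general {Ω : Type*} [MeasurableSpace Ω] (μ : Measure Ω) [IsProbabilityMeasure μ]
    {p q n : ℕ}
    (γt : Fin n → Ω → EuclideanSpace ℝ (Fin p)) (ξt : Fin n → Ω → EuclideanSpace ℝ (Fin q))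
    (γ0 : Ω → EuclideanSpace ℝ (Fin p)) (ξ0 : Ω → EuclideanSpace ℝ (Fin q))
    (hγmeas : ∀ i, Measurable (γt i)) (hξmeas : ∀ i, Measurable (ξt i))
    (hγ0 : Measurable γ0) (hξ0 : Measurable ξ0)
    -- (γt i, ξt i) are i.i.d. copies of (γ0, ξ0)
    (hindep : iIndepFun (fun i ω => (γt i ω, ξt i ω)) μ)
    (hident : ∀ i, μ.map (fun ω => (γt i ω, ξt i ω)) = μ.map (fun ω => (γ0 ω, ξ0 ω)))
    -- the loss ℓ(x, ·) for the fixed decision x, with values in [0,1]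
    (loss : EuclideanSpace ℝ (Fin q) → ℝ) (hloss : Measurable loss)
    (hbdd : ∀ ξ, loss ξ ∈ Set.Icc (0 : ℝ) 1)
    -- m is the regression function y ↦ E[ℓ(x, ξ̃) | γ̃ = y]
    (m : EuclideanSpace ℝ (Fin p) → ℝ)
    (hm : (fun ω => m (γ0 ω))
        =ᵐ[μ] μ[(fun ω => loss (ξ0 ω)) | MeasurableSpace.comap γ0 inferInstance])
    (Lγ : ℝ) (hLγ : 0 ≤ Lγ) (hmLip : ∀ y z, |m y - m z| ≤ Lγ * ‖y - z‖)
    -- density of γ̃ bounded below by fbar on the ball B(γ, h)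
    (f : EuclideanSpace ℝ (Fin p) → ℝ≥0∞) (hdensity : μ.map γ0 = volume.withDensity f)
    (γ : EuclideanSpace ℝ (Fin p)) (h fbar : ℝ) (hh : 0 < h) (hfbar : 0 < fbar)
    (hlb : ∀ y ∈ Metric.closedBall γ h, ENNReal.ofReal fbar ≤ f y)
    (ε : ℝ) (hε0 : 0 ≤ ε) (hε1 : ε ≤ 1)
    -- the Nadaraya-Watson estimator with spherical kernel
    (NW : Ω → ℝ)
    (hNW : ∀ ω, NW ω =
      if (0 : ℝ) < ∑ j, (if ‖γ - γt j ω‖ ≤ h then (1 : ℝ) else 0) then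
        (∑ i, (if ‖γ - γt i ω‖ ≤ h then (1 : ℝ) else 0) * loss (ξt i ω)) /
          (∑ j, (if ‖γ - γt j ω‖ ≤ h then (1 : ℝ) else 0))
      else 0) :
    (μ {ω | Lγ * h + ε < |m γ - NW ω|}).toReal
      ≤ 2 * Real.exp (-(n : ℝ) * (Real.pi ^ ((p : ℝ) / 2) / Real.Gamma ((p : ℝ) / 2 + 1))
          * fbar * h ^ (p : ℕ) * ε ^ 2 / 2) := by
  classical
  set c := π ^ ((p : ℝ) / 2) / Gamma ((p : ℝ) / 2 + 1)
  have hw (y : EuclideanSpace ℝ (Fin p)) :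
      (Metric.closedBall γ h).indicator 1 y = if ‖γ - y‖ ≤ h then (1 : ℝ) else 0 := by
    rw [Set.indicator_apply, Metric.mem_closedBall, dist_comm, dist_eq_norm, Pi.one_apply]
  have hm_meas : Measurable m :=
    (LipschitzWith.of_dist_le_mul (K := Lγ.toNNReal) fun y z => by
      rw [Real.dist_eq, dist_eq_norm, Real.coe_toNNReal _ hLγ]
      exact hmLip y z).continuous.measurable
  obtain ⟨hupper, hlower⟩ := measureReal_residual_sum_nonneg_le hγmeas hξmeas hγ0.comap_le
    (comap_measurable γ0) hξ0 hindep hident hloss hbdd hm_meas hm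
    (B := Metric.closedBall γ h) measurableSet_closedBall hε0 hε1
  simp only [hw, Fintype.card_fin] at hupper hlower
  have hrate : exp (-(μ.real (γ0 ⁻¹' Metric.closedBall γ h) * ε ^ 2 / 2)) ^ n ≤
      exp (-(n : ℝ) * c * fbar * h ^ p * ε ^ 2 / 2) := by
    have hball := mul_le_measureReal_preimage_closedBall hγ0 hdensity hh.le hfbar.le hlb
    rw [← exp_nat_mul, exp_le_exp]
    nlinarith [mul_le_mul_of_nonneg_left hball (by positivity : (0 : ℝ) ≤ n * ε ^ 2)]
  have hsub : {ω | Lγ * h + ε < |m γ - NW ω|} ⊆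
      {ω | 0 ≤ ∑ i, (if ‖γ - γt i ω‖ ≤ h then (1 : ℝ) else 0) *
        (m (γt i ω) - loss (ξt i ω) - ε)} ∪
      {ω | 0 ≤ ∑ i, (if ‖γ - γt i ω‖ ≤ h then (1 : ℝ) else 0) *
        (loss (ξt i ω) - m (γt i ω) - ε)} := by
    intro ω (hω : Lγ * h + ε < |m γ - NW ω|)
    rw [hNW ω] at hω
    refine sum_nonneg_or_of_lt_abs_sub_nadarayaWatson (fun i => by split_ifs <;> norm_num)
      (fun i hi => ?_) hω
    have hi' : ‖γ - γt i ω‖ ≤ h := by_contra fun hc => hi (if_neg hc)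
    exact (hmLip _ _).trans (mul_le_mul_of_nonneg_left hi' hLγ)
  calc (μ {ω | Lγ * h + ε < |m γ - NW ω|}).toReal
      ≤ _ := (measureReal_mono hsub).trans (measureReal_union_le _ _)
    _ ≤ _ := add_le_add (hupper.trans hrate) (hlower.trans hrate)
    _ = _ := by ring

theorem stmt_10 {Ω : Type*} [MeasurableSpace Ω] (μ : Measure Ω) [IsProbabilityMeasure μ]
    {p q n : ℕ} (hn : 0 < n)
    (γt : Fin n → Ω → EuclideanSpace ℝ (Fin p)) (ξt : Fin n → Ω → EuclideanSpace ℝ (Fin q))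
    (γ0 : Ω → EuclideanSpace ℝ (Fin p)) (ξ0 : Ω → EuclideanSpace ℝ (Fin q))
    (hγmeas : ∀ i, Measurable (γt i)) (hξmeas : ∀ i, Measurable (ξt i))
    (hγ0 : Measurable γ0) (hξ0 : Measurable ξ0)
    -- (γt i, ξt i) are i.i.d. copies of (γ0, ξ0)
    (hindep : iIndepFun (fun i ω => (γt i ω, ξt i ω)) μ)
    (hident : ∀ i, μ.map (fun ω => (γt i ω, ξt i ω)) = μ.map (fun ω => (γ0 ω, ξ0 ω)))
    -- the loss ℓ(x, ·) for the fixed decision x, with values in [0,1]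
    (loss : EuclideanSpace ℝ (Fin q) → ℝ) (hloss : Measurable loss)
    (hbdd : ∀ ξ, loss ξ ∈ Set.Icc (0 : ℝ) 1)
    -- m is the regression function y ↦ E[ℓ(x, ξ̃) | γ̃ = y]
    (m : EuclideanSpace ℝ (Fin p) → ℝ)
    (hm : (fun ω => m (γ0 ω))
        =ᵐ[μ] μ[(fun ω => loss (ξ0 ω)) | MeasurableSpace.comap γ0 inferInstance])
    (Lγ : ℝ) (hLγ : 0 ≤ Lγ) (hmLip : ∀ y z, |m y - m z| ≤ Lγ * ‖y - z‖)
    -- density of γ̃ bounded below by fbar on the ball B(γ, h)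
    (f : EuclideanSpace ℝ (Fin p) → ℝ≥0∞) (hdensity : μ.map γ0 = volume.withDensity f)
    (γ : EuclideanSpace ℝ (Fin p)) (h fbar : ℝ) (hh : 0 < h) (hfbar : 0 < fbar)
    (hlb : ∀ y ∈ Metric.closedBall γ h, ENNReal.ofReal fbar ≤ f y)
    (ε : ℝ) (hε0 : 0 ≤ ε) (hε1 : ε ≤ 1)
    -- the Nadaraya-Watson estimator with spherical kernel
    (NW : Ω → ℝ)
    (hNW : ∀ ω, NW ω =
      if (0 : ℝ) < ∑ j, (if ‖γ - γt j ω‖ ≤ h then (1 : ℝ) else 0) then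
        (∑ i, (if ‖γ - γt i ω‖ ≤ h then (1 : ℝ) else 0) * loss (ξt i ω)) /
          (∑ j, (if ‖γ - γt j ω‖ ≤ h then (1 : ℝ) else 0))
      else 0) :
    (μ {ω | Lγ * h + ε < |m γ - NW ω|}).toReal
      ≤ 2 * Real.exp (-(n : ℝ) * (Real.pi ^ ((p : ℝ) / 2) / Real.Gamma ((p : ℝ) / 2 + 1))
          * fbar * h ^ (p : ℕ) * ε ^ 2 / 2) :=
  stmt_10_general μ γt ξt γ0 ξ0 hγmeas hξmeas hγ0 hξ0 hindep hident loss hloss hbdd m hm Lγ hLγ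
    hmLip f hdensity γ h fbar hh hfbar hlb ε hε0 hε1 NW hNW
end
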